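/- arXiv:1505.01641 — 9 statements merged into one kernel-verified Lean document; each statement's English description precedes it below -/
import Mathlib

section
/- Let A be an n×n complex matrix, D = diag(d₁,…,d_m) a real diagonal m×m matrix, B = diag(b₁,…,b_m) with each b_k = ±1, and let ρ : ℝ → M_m(ℂ) satisfy ρ(x)* = B ρ(x) B for all x. Suppose Π : ℝ → M_{n×m}(ℂ) and S : ℝ → M_n(ℂ) are differentiable with Π′(x) = −i A Π(x) D + Π(x)[D, ρ(x)] and S′(x) = Π(x) D B Π(x)*, and that the matrix identity A S(0) − S(0) A* = i Π(0) B Π(0)* holds at x = 0. Then A S(x) − S(x) A* = i Π(x) B Π(x)* holds for all x ∈ ℝ. -/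
/-
Set F(x) = A S(x) − S(x) A* − i Π(x) B Π(x)*. Differentiating with the two equations, the terms
−iAΠD and ΠDBΠ* reproduce A S′ − S′ A* (since B and D are diagonal they commute, and D is real),
while the ρ-terms add up to i Π(CB + BC*)Π* with C = [D, ρ], which vanishes because ρ* = BρB and
B² = 1. So F′ = 0, and F(0) = 0 forces F ≡ 0.
-/

open Matrix

attribute [local instance] Matrix.normedAddCommGroup Matrix.normedSpace

section MatrixCalculus

variable {p q r : Type*} {M : ℝ → Matrix p q ℂ} {M' : Matrix p q ℂ} {x : ℝ}

theorem Matrix.hasDerivAt_iff_entrywise [Fintype q] :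
    HasDerivAt M M' x ↔ ∀ i j, HasDerivAt (fun y => M y i j) (M' i j) x :=
  hasDerivAt_pi.trans (forall_congr' fun _ => hasDerivAt_pi)

theorem HasDerivAt.matrix_mul [Fintype q] [Fintype r] {N : ℝ → Matrix q r ℂ} {N' : Matrix q r ℂ}
    (hM : HasDerivAt M M' x) (hN : HasDerivAt N N' x) :
    HasDerivAt (fun y => M y * N y) (M' * N x + M x * N') x := by
  rw [Matrix.hasDerivAt_iff_entrywise] at *
  intro i j
  simpa only [mul_apply, Matrix.add_apply, ← Finset.sum_add_distrib] using
    HasDerivAt.fun_sum (u := Finset.univ) fun k _ => (hM i k).fun_mul (hN k j)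

theorem HasDerivAt.matrix_conjTranspose [Fintype p] [Fintype q] (hM : HasDerivAt M M' x) :
    HasDerivAt (fun y => (M y)ᴴ) M'ᴴ x := by
  rw [Matrix.hasDerivAt_iff_entrywise] at *
  exact fun i j => (hM j i).star

end MatrixCalculus

theorem commutator_mul_add_mul_star_commutator_eq_zero {R : Type*} [Ring R] [StarRing R]
    {B D r : R} (hBB : B * B = 1) (hDB : D * B = B * D) (hD : star D = D)
    (hr : star r = B * r * B) :
    (D * r - r * D) * B + B * star (D * r - r * D) = 0 := by
  have hBDB : B * D * B = D := by rw [mul_assoc, hDB, ← mul_assoc, hBB, one_mul]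
  calc (D * r - r * D) * B + B * star (D * r - r * D)
      = (D * r - r * D) * B + ((B * B) * r * (D * B) - (B * D * B) * r * B) := by
        simp only [star_sub, star_mul, hD, hr, hDB]; noncomm_ring
    _ = 0 := by rw [hBB, hBDB]; noncomm_ring

theorem I_smul_mul_mul_conjTranspose_add_eq_sub {p q : Type*} [Fintype p] [Fintype q]
    (A : Matrix p p ℂ) (P : Matrix p q ℂ) {D B C : Matrix q q ℂ} (hDB : D * B = B * D)
    (hD : Dᴴ = D) (hC : C * B + B * Cᴴ = 0) :
    Complex.I • (((-Complex.I) • (A * P * D) + P * C) * B * Pᴴ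
        + P * B * ((-Complex.I) • (A * P * D) + P * C)ᴴ)
      = A * (P * D * B * Pᴴ) - P * D * B * Pᴴ * Aᴴ := by
  have hPCP : P * (C * B + B * Cᴴ) * Pᴴ = 0 := by rw [hC, Matrix.mul_zero, Matrix.zero_mul]
  rw [← sub_eq_zero, ← smul_zero Complex.I, ← hPCP]
  simp only [conjTranspose_add, conjTranspose_neg, conjTranspose_smul, conjTranspose_mul, hD,
    Complex.star_def, Complex.conj_I, neg_neg, Matrix.add_mul, Matrix.mul_add, Matrix.smul_mul,
    Matrix.mul_smul, Matrix.neg_mul, smul_add, smul_neg, smul_smul, Complex.I_mul_I, neg_smul,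
    one_smul, Matrix.mul_assoc, hDB]
  abel

/-- If the matrix identity `AS − SA* = iΠBΠ*` holds at `x = 0`, then it holds for all `x`. -/
theorem stmt_1 {n m : ℕ}
    (A : Matrix (Fin n) (Fin n) ℂ)
    (d b : Fin m → ℝ) (hb : ∀ k, b k = 1 ∨ b k = -1)
    (D B : Matrix (Fin m) (Fin m) ℂ)
    (hD : D = Matrix.diagonal (fun k => (d k : ℂ)))
    (hB : B = Matrix.diagonal (fun k => (b k : ℂ)))
    (ρ : ℝ → Matrix (Fin m) (Fin m) ℂ)
    (hρ : ∀ x, (ρ x)ᴴ = B * ρ x * B)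
    (Pm : ℝ → Matrix (Fin n) (Fin m) ℂ)
    (S : ℝ → Matrix (Fin n) (Fin n) ℂ)
    (hPm : ∀ x i j, HasDerivAt (fun y => Pm y i j)
      (((-Complex.I) • (A * Pm x * D) + Pm x * (D * ρ x - ρ x * D)) i j) x)
    (hS : ∀ x i j, HasDerivAt (fun y => S y i j)
      ((Pm x * D * B * (Pm x)ᴴ) i j) x)
    (hid0 : A * S 0 - S 0 * Aᴴ = Complex.I • (Pm 0 * B * (Pm 0)ᴴ)) :
    ∀ x : ℝ, A * S x - S x * Aᴴ = Complex.I • (Pm x * B * (Pm x)ᴴ) := by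
  have hBB : B * B = 1 := by
    rw [hB, diagonal_mul_diagonal, ← diagonal_one]
    congr 1; funext k
    rcases hb k with h | h <;> simp [h]
  have hDB : D * B = B * D := hD ▸ hB ▸ (commute_diagonal _ _).eq
  have hDH : Dᴴ = D := hD ▸ isHermitian_diagonal_iff.mpr fun k => Complex.conj_ofReal (d k)
  let F := fun y => A * S y - S y * Aᴴ - Complex.I • (Pm y * B * (Pm y)ᴴ)
  have hF : ∀ y, HasDerivAt F 0 y := by
    intro y
    have hP := Matrix.hasDerivAt_iff_entrywise.mpr (hPm y)
    have hS' := Matrix.hasDerivAt_iff_entrywise.mpr (hS y)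
    have hPBPH := (hP.matrix_mul (hasDerivAt_const y B)).matrix_mul hP.matrix_conjTranspose
    refine ((((hasDerivAt_const y A).matrix_mul hS').sub
      (hS'.matrix_mul (hasDerivAt_const y Aᴴ))).sub (hPBPH.const_smul Complex.I)).congr_deriv ?_
    simp only [Matrix.zero_mul, Matrix.mul_zero, zero_add, add_zero]
    rw [I_smul_mul_mul_conjTranspose_add_eq_sub A (Pm y) hDB hDH
      (commutator_mul_add_mul_star_commutator_eq_zero hBB hDB hDH (hρ y)), sub_self]
  intro x
  have hFconst := is_const_of_deriv_eq_zero (fun y => (hF y).differentiableAt)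
    (fun y => (hF y).deriv) x 0
  exact sub_eq_zero.mp (hFconst.trans (sub_eq_zero.mpr hid0))
end

section
/- Let A ∈ M_n(ℂ), let S ∈ M_n(ℂ) be invertible with S = S*, let Π ∈ M_{n×m}(ℂ), let B = diag(b₁,…,b_m) with each b_k = ±1, and suppose A S − S A* = i Π B Π*. Then for every z ∈ ℂ such that neither z nor its conjugate z̄ lies in the spectrum of A, the matrix w_A(z) = I_m − i B Π* S^{-1} (A − z I_n)^{-1} Π satisfies w_A(z) B w_A(z̄)* = B; in particular, w_A(z) is invertible with w_A(z)^{-1} = B w_A(z̄)* B. -/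
open Matrix

/-- The transfer matrix function `w_A(z) = I − iBΠ*S⁻¹(A−zI)⁻¹Π` satisfies
`w_A(z) B w_A(z̄)* = B`; in particular it is invertible with
`w_A(z)⁻¹ = B w_A(z̄)* B`. -/
theorem stmt_4 {n m : ℕ}
    (A : Matrix (Fin n) (Fin n) ℂ)
    (S : Matrix (Fin n) (Fin n) ℂ)
    (hSinv : IsUnit S) (hSsa : S = Sᴴ)
    (Pm : Matrix (Fin n) (Fin m) ℂ)
    (b : Fin m → ℝ) (hb : ∀ k, b k = 1 ∨ b k = -1)
    (B : Matrix (Fin m) (Fin m) ℂ)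
    (hB : B = Matrix.diagonal (fun k => (b k : ℂ)))
    (hid : A * S - S * Aᴴ = Complex.I • (Pm * B * Pmᴴ))
    (z : ℂ) (hz : z ∉ spectrum ℂ A)
    (hzbar : (starRingEnd ℂ) z ∉ spectrum ℂ A) :
    ((1 : Matrix (Fin m) (Fin m) ℂ) - Complex.I • (B * Pmᴴ * S⁻¹ * (A - z • 1)⁻¹ * Pm))
        * B *
      ((1 : Matrix (Fin m) (Fin m) ℂ)
          - Complex.I • (B * Pmᴴ * S⁻¹ * (A - (starRingEnd ℂ) z • 1)⁻¹ * Pm))ᴴ = B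
    ∧ IsUnit ((1 : Matrix (Fin m) (Fin m) ℂ)
        - Complex.I • (B * Pmᴴ * S⁻¹ * (A - z • 1)⁻¹ * Pm))
    ∧ ((1 : Matrix (Fin m) (Fin m) ℂ)
        - Complex.I • (B * Pmᴴ * S⁻¹ * (A - z • 1)⁻¹ * Pm))⁻¹
      = B * ((1 : Matrix (Fin m) (Fin m) ℂ)
          - Complex.I • (B * Pmᴴ * S⁻¹ * (A - (starRingEnd ℂ) z • 1)⁻¹ * Pm))ᴴ * B := by
  set T := A - z • (1 : Matrix (Fin n) (Fin n) ℂ) with hTdef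
  set U := A - (starRingEnd ℂ) z • (1 : Matrix (Fin n) (Fin n) ℂ) with hUdef
  -- invertibility of T and U
  have hTu : IsUnit T := by
    have h := spectrum.notMem_iff.mp hz
    rw [Algebra.algebraMap_eq_smul_one] at h
    simpa [hTdef, neg_sub] using h.neg
  have hUu : IsUnit U := by
    have h := spectrum.notMem_iff.mp hzbar
    rw [Algebra.algebraMap_eq_smul_one] at h
    simpa [hUdef, neg_sub] using h.neg
  have hTd : IsUnit T.det := (Matrix.isUnit_iff_isUnit_det T).mp hTu
  have hUd : IsUnit U.det := (Matrix.isUnit_iff_isUnit_det U).mp hUu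
  have hSd : IsUnit S.det := (Matrix.isUnit_iff_isUnit_det S).mp hSinv
  have hUHd : IsUnit (Uᴴ).det := by
    rw [Matrix.det_conjTranspose]; exact hUd.star
  -- structure facts
  have hUH : Uᴴ = Aᴴ - z • 1 := by
    simp [hUdef, conjTranspose_sub, conjTranspose_smul]
  have hBH : Bᴴ = B := by
    rw [hB, Matrix.diagonal_conjTranspose]
    rw [show star (fun k => ((b k : ℂ))) = fun k => ((b k : ℂ)) from
      funext fun k => by simp]
  have hBB : B * B = 1 := by
    rw [hB, Matrix.diagonal_mul_diagonal]
    have : (fun k => (b k : ℂ) * (b k : ℂ)) = fun _ => (1 : ℂ) := by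
      funext k
      rcases hb k with h | h <;> rw [h] <;> norm_num
    rw [this, Matrix.diagonal_one]
  have hSiH : (S⁻¹)ᴴ = S⁻¹ := by
    rw [Matrix.conjTranspose_nonsing_inv, ← hSsa]
  -- conjugate transpose of w_A(z̄)
  have hconj : ((1 : Matrix (Fin m) (Fin m) ℂ)
      - Complex.I • (B * Pmᴴ * S⁻¹ * U⁻¹ * Pm))ᴴ
      = 1 + Complex.I • (Pmᴴ * (Uᴴ)⁻¹ * S⁻¹ * Pm * B) := by
    simp only [conjTranspose_sub, conjTranspose_smul, conjTranspose_one,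
      conjTranspose_mul, conjTranspose_conjTranspose,
      Matrix.conjTranspose_nonsing_inv, hSiH, hBH, Complex.star_def, Complex.conj_I,
      neg_smul, sub_neg_eq_add]
    simp only [Matrix.mul_assoc]
  -- the main abbreviations
  set X := B * Pmᴴ * S⁻¹ * T⁻¹ * Pm with hXdef
  set Y := Pmᴴ * (Uᴴ)⁻¹ * S⁻¹ * Pm * B with hYdef
  -- the key identity
  have hK : Pm * B * Pmᴴ = (-Complex.I) • (T * S - S * Uᴴ) := by
    have h2 : T * S - S * Uᴴ = A * S - S * Aᴴ := by
      rw [hUH, hTdef]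
      simp only [sub_mul, mul_sub, smul_mul_assoc, Matrix.mul_smul, one_mul, mul_one]
      abel
    rw [h2, hid, smul_smul]
    norm_num [Complex.I_mul_I]
  have h1 : T⁻¹ * (Pm * B * Pmᴴ) * (Uᴴ)⁻¹
      = Complex.I • (T⁻¹ * S) - Complex.I • (S * (Uᴴ)⁻¹) := by
    have e : T⁻¹ * (T * S - S * Uᴴ) * (Uᴴ)⁻¹ = S * (Uᴴ)⁻¹ - T⁻¹ * S := by
      have e1 : T⁻¹ * (T * S) * (Uᴴ)⁻¹ = S * (Uᴴ)⁻¹ := by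
        rw [← Matrix.mul_assoc, Matrix.nonsing_inv_mul T hTd, Matrix.one_mul]
      have e2 : T⁻¹ * (S * Uᴴ) * (Uᴴ)⁻¹ = T⁻¹ * S := by
        rw [Matrix.mul_assoc, Matrix.mul_assoc, Matrix.mul_nonsing_inv _ hUHd,
          Matrix.mul_one]
      calc T⁻¹ * (T * S - S * Uᴴ) * (Uᴴ)⁻¹
          = T⁻¹ * (T * S) * (Uᴴ)⁻¹ - T⁻¹ * (S * Uᴴ) * (Uᴴ)⁻¹ := by
            rw [Matrix.mul_sub, Matrix.sub_mul]
        _ = S * (Uᴴ)⁻¹ - T⁻¹ * S := by rw [e1, e2]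
    rw [hK, Matrix.mul_smul, Matrix.smul_mul, e, neg_smul, smul_sub, neg_sub]
  have h1' : ∀ R : Matrix (Fin n) (Fin m) ℂ,
      T⁻¹ * (Pm * (B * (Pmᴴ * ((Uᴴ)⁻¹ * R))))
      = Complex.I • (T⁻¹ * (S * R)) - Complex.I • (S * ((Uᴴ)⁻¹ * R)) := by
    intro R
    calc T⁻¹ * (Pm * (B * (Pmᴴ * ((Uᴴ)⁻¹ * R))))
        = (T⁻¹ * (Pm * B * Pmᴴ) * (Uᴴ)⁻¹) * R := by simp only [Matrix.mul_assoc]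
      _ = (Complex.I • (T⁻¹ * S) - Complex.I • (S * (Uᴴ)⁻¹)) * R := by rw [h1]
      _ = Complex.I • (T⁻¹ * (S * R)) - Complex.I • (S * ((Uᴴ)⁻¹ * R)) := by
          simp only [Matrix.sub_mul, Matrix.smul_mul, Matrix.mul_assoc]
  have hSS : ∀ R : Matrix (Fin n) (Fin m) ℂ, S * (S⁻¹ * R) = R := by
    intro R
    rw [← Matrix.mul_assoc, Matrix.mul_nonsing_inv _ hSd, Matrix.one_mul]
  have hSiS : ∀ R : Matrix (Fin n) (Fin m) ℂ, S⁻¹ * (S * R) = R := by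
    intro R
    rw [← Matrix.mul_assoc, Matrix.nonsing_inv_mul _ hSd, Matrix.one_mul]
  -- key quadratic identity
  have key : X * (B * Y) = Complex.I • (X * B) - Complex.I • (B * Y) := by
    rw [hXdef, hYdef]
    simp only [Matrix.mul_assoc]
    rw [h1' (S⁻¹ * (Pm * B))]
    simp only [Matrix.mul_smul, Matrix.mul_sub, smul_sub, hSS, hSiS]
  -- main identity
  have main : ((1 : Matrix (Fin m) (Fin m) ℂ) - Complex.I • X) * B
      * (1 + Complex.I • Y) = B := by
    have expand : ((1 : Matrix (Fin m) (Fin m) ℂ) - Complex.I • X) * B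
        * (1 + Complex.I • Y)
        = B + Complex.I • (B * Y) - Complex.I • (X * B) - (Complex.I * Complex.I) • (X * (B * Y)) := by
      simp only [sub_mul, add_mul, mul_add, one_mul, mul_one, Matrix.smul_mul,
        Matrix.mul_smul, smul_smul, mul_assoc]
      abel
    rw [expand, key, Complex.I_mul_I, neg_one_smul]
    abel
  refine ⟨?_, ?_, ?_⟩
  · rw [hconj]; exact main
  · have hright : ((1 : Matrix (Fin m) (Fin m) ℂ) - Complex.I • X)
        * (B * (1 + Complex.I • Y) * B) = 1 := by
      calc ((1 : Matrix (Fin m) (Fin m) ℂ) - Complex.I • X)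
            * (B * (1 + Complex.I • Y) * B)
          = (((1 : Matrix (Fin m) (Fin m) ℂ) - Complex.I • X) * B * (1 + Complex.I • Y)) * B := by
            simp only [mul_assoc]
        _ = B * B := by rw [main]
        _ = 1 := hBB
    rw [Matrix.isUnit_iff_isUnit_det]
    exact Matrix.isUnit_det_of_right_inverse hright
  · have hright : ((1 : Matrix (Fin m) (Fin m) ℂ) - Complex.I • X)
        * (B * ((1 : Matrix (Fin m) (Fin m) ℂ)
          - Complex.I • (B * Pmᴴ * S⁻¹ * U⁻¹ * Pm))ᴴ * B) = 1 := by
      rw [hconj]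
      calc ((1 : Matrix (Fin m) (Fin m) ℂ) - Complex.I • X)
            * (B * (1 + Complex.I • Y) * B)
          = (((1 : Matrix (Fin m) (Fin m) ℂ) - Complex.I • X) * B * (1 + Complex.I • Y)) * B := by
            simp only [mul_assoc]
        _ = B * B := by rw [main]
        _ = 1 := hBB
    exact Matrix.inv_eq_right_inv hright
end

section
/- In the two-variable GBDT setting (D, D̂ real diagonal m×m, B = diag(±1), A ∈ M_n(ℂ), ρ : ℝ² → M_m(ℂ) with ρ* = BρB, and Π, S satisfying Π_x = −iAΠD + Π[D,ρ], Π_t = −iAΠD̂ + Π[D̂,ρ], S_x = ΠDBΠ*, S_t = ΠD̂BΠ*, with AS − SA* = iΠBΠ* and S invertible everywhere), fix z ∈ ℂ not in the spectrum of A with w_A(0,0,z) invertible, and let w : ℝ² → M_m(ℂ) be the wave function of the initial systems, i.e. w_x = (izD − [D,ρ])w, w_t = (izD̂ − [D̂,ρ])w, w(0,0) = I_m. Then w̃(x,t) := w_A(x,t,z) w(x,t) w_A(0,0,z)^{-1} satisfies the transformed systems w̃_x = (izD − [D,ρ̃]) w̃ and w̃_t = (izD̂ − [D̂,ρ̃])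 w̃, with w̃(0,0) = I_m, where ρ̃ = ρ − BΠ*S^{-1}Π and w_A(x,t,z) = I_m − iBΠ(x,t)*S(x,t)^{-1}(A − zI_n)^{-1}Π(x,t). -/
/-!
Write `X = BΠ*S⁻¹` and `R = (A − z)⁻¹`, so that `w_A = I − iXRΠ` and `ρ̃ = ρ − XΠ`.
Differentiating `S⁻¹` and using the operator identity in the form
`A*S⁻¹ = S⁻¹A − iS⁻¹ΠBΠ*S⁻¹`, together with `ρ* = BρB`, gives
`X_x = iDXA + [D, XΠ]X − [D, ρ]X`; combined with `Π_x` and `AR = RA = I + zR` this yields the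
gauge relation `(w_A)_x = (izD − [D, ρ̃]) w_A − w_A (izD − [D, ρ])`.
Hence `w_A w` solves the transformed system whenever `w` solves the initial one, and so does
`w_A w C` for the constant `C = w_A(0,0)⁻¹`, which normalises the value at the origin.
The same computation applies to `t` with `D̂` in place of `D`.
-/

open Matrix

def HasEntrywiseDerivAt {m n : Type*} (F : ℝ → Matrix m n ℂ) (F' : Matrix m n ℂ) (x : ℝ) :
    Prop :=
  ∀ i j, HasDerivAt (fun y => F y i j) (F' i j) x

namespace HasEntrywiseDerivAt

variable {l m n : Type*} {x : ℝ} {F : ℝ → Matrix m n ℂ} {F' : Matrix m n ℂ}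

theorem congr_deriv {F'' : Matrix m n ℂ} (hF : HasEntrywiseDerivAt F F' x) (e : F' = F'') :
    HasEntrywiseDerivAt F F'' x :=
  e ▸ hF

theorem const_sub (M : Matrix m n ℂ) (hF : HasEntrywiseDerivAt F F' x) :
    HasEntrywiseDerivAt (fun y => M - F y) (-F') x :=
  fun i j => by simpa using (hF i j).const_sub (M i j)

theorem const_smul (c : ℂ) (hF : HasEntrywiseDerivAt F F' x) :
    HasEntrywiseDerivAt (fun y => c • F y) (c • F') x :=
  fun i j => by simpa using (hF i j).const_mul c

theorem conjTranspose (hF : HasEntrywiseDerivAt F F' x) :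
    HasEntrywiseDerivAt (fun y => (F y)ᴴ) F'ᴴ x :=
  fun i j => by simpa using (hF j i).star

variable [Fintype m]

theorem mul {G : ℝ → Matrix m n ℂ} {G' : Matrix m n ℂ} {F : ℝ → Matrix l m ℂ}
    {F' : Matrix l m ℂ} (hF : HasEntrywiseDerivAt F F' x) (hG : HasEntrywiseDerivAt G G' x) :
    HasEntrywiseDerivAt (fun y => F y * G y) (F' * G x + F x * G') x := by
  intro i j
  simpa [mul_apply, Finset.sum_add_distrib] using
    HasDerivAt.fun_sum (u := Finset.univ) fun k _ => (hF i k).fun_mul (hG k j)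

theorem const_mul (M : Matrix l m ℂ) {G : ℝ → Matrix m n ℂ} {G' : Matrix m n ℂ}
    (hG : HasEntrywiseDerivAt G G' x) : HasEntrywiseDerivAt (fun y => M * G y) (M * G') x :=
  fun i j => by simpa [mul_apply] using
    HasDerivAt.fun_sum (u := Finset.univ) fun k _ => (hG k j).const_mul (M i k)

theorem mul_const {F : ℝ → Matrix l m ℂ} {F' : Matrix l m ℂ} (hF : HasEntrywiseDerivAt F F' x)
    (M : Matrix m n ℂ) : HasEntrywiseDerivAt (fun y => F y * M) (F' * M) x :=
  fun i j => by simpa [mul_apply] using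
    HasDerivAt.fun_sum (u := Finset.univ) fun k _ => (hF i k).mul_const (M k j)

theorem mul_of_gauge [Fintype l] {g : ℝ → Matrix l m ℂ} {w : ℝ → Matrix m n ℂ}
    {M : Matrix l l ℂ} {N : Matrix m m ℂ} (hg : HasEntrywiseDerivAt g (M * g x - g x * N) x)
    (hw : HasEntrywiseDerivAt w (N * w x) x) :
    HasEntrywiseDerivAt (fun y => g y * w y) (M * (g x * w x)) x :=
  (hg.mul hw).congr_deriv <| by
    rw [Matrix.sub_mul, Matrix.mul_assoc, Matrix.mul_assoc, sub_add_cancel]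

end HasEntrywiseDerivAt

section LinftyOp

-- Any norm would do for the comparison with entrywise derivatives; the operator norm makes
-- `Matrix n n ℂ` a normed algebra, as `hasFDerivAt_ringInverse` needs.
attribute [local instance] Matrix.linftyOpNormedAddCommGroup Matrix.linftyOpNormedSpace
  Matrix.linftyOpNormedRing Matrix.linftyOpNormedAlgebra

variable {m n : Type*} [Fintype m] [Fintype n] {x : ℝ}

theorem HasDerivAt.hasEntrywiseDerivAt {F : ℝ → Matrix m n ℂ} {F' : Matrix m n ℂ}
    (h : HasDerivAt F F' x) : HasEntrywiseDerivAt F F' x := fun i j =>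
  (LinearMap.toContinuousLinearMap (entryLinearMap ℝ ℂ i j)).hasFDerivAt.comp_hasDerivAt x h

theorem HasEntrywiseDerivAt.hasDerivAt [DecidableEq m] [DecidableEq n] {F : ℝ → Matrix m n ℂ}
    {F' : Matrix m n ℂ} (h : HasEntrywiseDerivAt F F' x) : HasDerivAt F F' x := by
  have hsum := HasDerivAt.fun_sum (u := Finset.univ) fun i _ =>
    HasDerivAt.fun_sum (u := Finset.univ) fun j _ => (h i j).smul_const (single i j (1 : ℂ))
  simp only [smul_single, smul_eq_mul, mul_one, ← matrix_eq_sum_single] at hsum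
  exact hsum

theorem HasEntrywiseDerivAt.inv [DecidableEq n] {S : ℝ → Matrix n n ℂ} {S' : Matrix n n ℂ}
    (h : HasEntrywiseDerivAt S S' x) (hS : IsUnit (S x)) :
    HasEntrywiseDerivAt (fun y => (S y)⁻¹) (-((S x)⁻¹ * S' * (S x)⁻¹)) x := by
  have h' := (hasFDerivAt_ringInverse (𝕜 := ℝ) hS.unit).comp_hasDerivAt x h.hasDerivAt
  simp only [_root_.neg_apply, ContinuousLinearMap.mulLeftRight_apply, ← Ring.inverse_unit,
    IsUnit.unit_spec] at h'
  simp only [nonsing_inv_eq_ringInverse]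
  exact h'.hasEntrywiseDerivAt

end LinftyOp

section Darboux

variable {m n : Type*} [Fintype m] [Fintype n]

theorem conjTranspose_mul_eq_of_sub_eq_smul [DecidableEq n] {A S T : Matrix n n ℂ}
    {P : Matrix n m ℂ} {B : Matrix m m ℂ} (hid : A * S - S * Aᴴ = Complex.I • (P * B * Pᴴ))
    (hST : S * T = 1) (hTS : T * S = 1) : Aᴴ * T = T * A - Complex.I • (T * P * B * Pᴴ * T) := by
  have h := congr(T * $hid * T)
  simp only [Matrix.mul_sub, Matrix.sub_mul, Matrix.mul_smul, Matrix.smul_mul, Matrix.mul_assoc,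
    hST, Matrix.mul_one] at h
  simp only [← Matrix.mul_assoc, hTS, Matrix.one_mul] at h
  rw [← h]
  abel

/-- The derivative of `X = BΠ*S⁻¹`, computed from `Π' = −iAΠE + Π[E, ρ]` and
`(S⁻¹)' = −S⁻¹ΠEBΠ*S⁻¹`. -/
theorem darbouxFactor_deriv_eq [DecidableEq m] {A T : Matrix n n ℂ} {P : Matrix n m ℂ}
    {B E ρ : Matrix m m ℂ} (hAT : Aᴴ * T = T * A - Complex.I • (T * P * B * Pᴴ * T))
    (hBB : B * B = 1) (hBE : Commute B E) (hE : E.IsHermitian) (hρ : ρᴴ = B * ρ * B) :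
    B * ((-Complex.I) • (A * P * E) + P * (E * ρ - ρ * E))ᴴ * T
        + B * Pᴴ * (-(T * (P * E * B * Pᴴ) * T))
      = Complex.I • (E * (B * Pᴴ * T) * A)
        + (E * (B * Pᴴ * T * P) - B * Pᴴ * T * P * E) * (B * Pᴴ * T)
        - (E * ρ - ρ * E) * (B * Pᴴ * T) := by
  have hBB' : ∀ X : Matrix m n ℂ, B * (B * X) = X := by
    intro X
    rw [← Matrix.mul_assoc, hBB, Matrix.one_mul]
  have hBE' : ∀ X : Matrix m n ℂ, B * (E * X) = E * (B * X) := by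
    intro X
    rw [← Matrix.mul_assoc, hBE.eq, Matrix.mul_assoc]
  simp only [conjTranspose_add, conjTranspose_smul, conjTranspose_mul, conjTranspose_sub,
    hE.eq, hρ, Complex.star_def, map_neg, Complex.conj_I, neg_neg]
  simp only [Matrix.mul_add, Matrix.add_mul, Matrix.mul_sub, Matrix.sub_mul, Matrix.mul_smul,
    Matrix.smul_mul, Matrix.mul_assoc, Matrix.mul_neg, hAT, hBB', hBE']
  match_scalars <;> simp

theorem darboux_deriv_eq [DecidableEq m] [DecidableEq n] {A R : Matrix n n ℂ}
    {X : Matrix m n ℂ} {P : Matrix n m ℂ} {E ρ : Matrix m m ℂ} {z : ℂ}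
    (hRA : R * (A - z • 1) = 1) (hAR : (A - z • 1) * R = 1) :
    -(Complex.I • ((Complex.I • (E * X * A) + (E * (X * P) - X * P * E) * X
          - (E * ρ - ρ * E) * X) * R * P
        + X * R * ((-Complex.I) • (A * P * E) + P * (E * ρ - ρ * E))))
      = ((Complex.I * z) • E - (E * (ρ - X * P) - (ρ - X * P) * E))
          * (1 - Complex.I • (X * R * P))
        - (1 - Complex.I • (X * R * P)) * ((Complex.I * z) • E - (E * ρ - ρ * E)) := by
  have hRA₀ : R * A = 1 + z • R := by
    rw [← hRA, Matrix.mul_sub, Matrix.mul_smul, Matrix.mul_one, sub_add_cancel]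
  have hAR₀ : A * R = 1 + z • R := by
    rw [← hAR, Matrix.sub_mul, Matrix.smul_mul, Matrix.one_mul, sub_add_cancel]
  have hRA' : ∀ Y : Matrix n m ℂ, R * (A * Y) = Y + z • (R * Y) := by
    intro Y
    rw [← Matrix.mul_assoc, hRA₀, Matrix.add_mul, Matrix.one_mul, Matrix.smul_mul]
  have hAR' : ∀ Y : Matrix n m ℂ, A * (R * Y) = Y + z • (R * Y) := by
    intro Y
    rw [← Matrix.mul_assoc, hAR₀, Matrix.add_mul, Matrix.one_mul, Matrix.smul_mul]
  simp only [Matrix.mul_add, Matrix.add_mul, Matrix.mul_sub, Matrix.sub_mul, Matrix.mul_smul,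
    Matrix.smul_mul, Matrix.mul_assoc, Matrix.mul_one, Matrix.one_mul, hRA', hAR']
  match_scalars <;> ring_nf <;> simp

theorem hasEntrywiseDerivAt_darboux [DecidableEq m] [DecidableEq n] {A : Matrix n n ℂ}
    {B E ρ : Matrix m m ℂ} {P : ℝ → Matrix n m ℂ} {S : ℝ → Matrix n n ℂ} {z : ℂ} {x : ℝ}
    (hP : HasEntrywiseDerivAt P ((-Complex.I) • (A * P x * E) + P x * (E * ρ - ρ * E)) x)
    (hS : HasEntrywiseDerivAt S (P x * E * B * (P x)ᴴ) x) (hSx : IsUnit (S x))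
    (hid : A * S x - S x * Aᴴ = Complex.I • (P x * B * (P x)ᴴ)) (hAz : IsUnit (A - z • 1))
    (hBB : B * B = 1) (hBE : Commute B E) (hE : E.IsHermitian) (hρ : ρᴴ = B * ρ * B) :
    HasEntrywiseDerivAt (fun y => 1 - Complex.I • (B * (P y)ᴴ * (S y)⁻¹ * (A - z • 1)⁻¹ * P y))
      (((Complex.I * z) • E - (E * (ρ - B * (P x)ᴴ * (S x)⁻¹ * P x)
          - (ρ - B * (P x)ᴴ * (S x)⁻¹ * P x) * E))
        * (1 - Complex.I • (B * (P x)ᴴ * (S x)⁻¹ * (A - z • 1)⁻¹ * P x))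
      - (1 - Complex.I • (B * (P x)ᴴ * (S x)⁻¹ * (A - z • 1)⁻¹ * P x))
        * ((Complex.I * z) • E - (E * ρ - ρ * E))) x := by
  have hSdet := (isUnit_iff_isUnit_det _).mp hSx
  have hAzdet := (isUnit_iff_isUnit_det _).mp hAz
  have hAT := conjTranspose_mul_eq_of_sub_eq_smul hid (mul_nonsing_inv _ hSdet)
    (nonsing_inv_mul _ hSdet)
  have hX : HasEntrywiseDerivAt (fun y => B * (P y)ᴴ * (S y)⁻¹) _ x :=
    ((hP.conjTranspose.const_mul B).mul (hS.inv hSx)).congr_deriv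
      (darbouxFactor_deriv_eq hAT hBB hBE hE hρ)
  exact (((hX.mul_const _).mul hP).const_smul Complex.I |>.const_sub 1).congr_deriv
    (darboux_deriv_eq (nonsing_inv_mul _ hAzdet) (mul_nonsing_inv _ hAzdet))

end Darboux

theorem diagonal_mul_self_eq_one_of_sign {m : Type*} [Fintype m] [DecidableEq m] {b : m → ℝ}
    (hb : ∀ k, b k = 1 ∨ b k = -1) :
    diagonal (fun k => (b k : ℂ)) * diagonal (fun k => (b k : ℂ)) = 1 := by
  rw [diagonal_mul_diagonal, ← diagonal_one]
  congr 1
  funext k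
  rcases hb k with h | h <;> simp [h]

theorem isHermitian_diagonal_ofReal {m : Type*} [DecidableEq m] (d : m → ℝ) :
    (diagonal fun k => (d k : ℂ)).IsHermitian :=
  isHermitian_diagonal_of_self_adjoint _ <| funext fun k => Complex.conj_ofReal (d k)

/-- The transformed wave function `w̃(x,t) = w_A(x,t,z) w(x,t) w_A(0,0,z)⁻¹` satisfies the
transformed auxiliary systems `w̃_x = (izD − [D,ρ̃])w̃`, `w̃_t = (izD̂ − [D̂,ρ̃])w̃`,
with `w̃(0,0) = I_m`. -/
theorem stmt_7 {n m : ℕ}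
    (A : Matrix (Fin n) (Fin n) ℂ)
    (d dh b : Fin m → ℝ) (hb : ∀ k, b k = 1 ∨ b k = -1)
    (D Dh B : Matrix (Fin m) (Fin m) ℂ)
    (hD : D = Matrix.diagonal (fun k => (d k : ℂ)))
    (hDh : Dh = Matrix.diagonal (fun k => (dh k : ℂ)))
    (hB : B = Matrix.diagonal (fun k => (b k : ℂ)))
    (ρ : ℝ → ℝ → Matrix (Fin m) (Fin m) ℂ)
    (hρsym : ∀ x t, (ρ x t)ᴴ = B * ρ x t * B)
    (Pm : ℝ → ℝ → Matrix (Fin n) (Fin m) ℂ)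
    (S : ℝ → ℝ → Matrix (Fin n) (Fin n) ℂ)
    (hPmx : ∀ x t i j, HasDerivAt (fun y => Pm y t i j)
      (((-Complex.I) • (A * Pm x t * D) + Pm x t * (D * ρ x t - ρ x t * D)) i j) x)
    (hPmt : ∀ x t i j, HasDerivAt (fun s => Pm x s i j)
      (((-Complex.I) • (A * Pm x t * Dh) + Pm x t * (Dh * ρ x t - ρ x t * Dh)) i j) t)
    (hSx : ∀ x t i j, HasDerivAt (fun y => S y t i j)
      ((Pm x t * D * B * (Pm x t)ᴴ) i j) x)
    (hSt : ∀ x t i j, HasDerivAt (fun s => S x s i j)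
      ((Pm x t * Dh * B * (Pm x t)ᴴ) i j) t)
    (hid : ∀ x t, A * S x t - S x t * Aᴴ = Complex.I • (Pm x t * B * (Pm x t)ᴴ))
    (hSinv : ∀ x t, IsUnit (S x t))
    (z : ℂ) (hz : z ∉ spectrum ℂ A)
    (wA : ℝ → ℝ → Matrix (Fin m) (Fin m) ℂ)
    (hwA : ∀ x t, wA x t = (1 : Matrix (Fin m) (Fin m) ℂ)
      - Complex.I • (B * (Pm x t)ᴴ * (S x t)⁻¹ * (A - z • 1)⁻¹ * Pm x t))
    (hwA00 : IsUnit (wA 0 0))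
    (w : ℝ → ℝ → Matrix (Fin m) (Fin m) ℂ)
    (hwx : ∀ x t i j, HasDerivAt (fun y => w y t i j)
      ((((Complex.I * z) • D - (D * ρ x t - ρ x t * D)) * w x t) i j) x)
    (hwt : ∀ x t i j, HasDerivAt (fun s => w x s i j)
      ((((Complex.I * z) • Dh - (Dh * ρ x t - ρ x t * Dh)) * w x t) i j) t)
    (hw00 : w 0 0 = 1) :
    (∀ x t i j, HasDerivAt (fun y => (wA y t * w y t * (wA 0 0)⁻¹) i j)
      ((((Complex.I * z) • D
          - (D * (ρ x t - B * (Pm x t)ᴴ * (S x t)⁻¹ * Pm x t)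
              - (ρ x t - B * (Pm x t)ᴴ * (S x t)⁻¹ * Pm x t) * D))
        * (wA x t * w x t * (wA 0 0)⁻¹)) i j) x)
    ∧ (∀ x t i j, HasDerivAt (fun s => (wA x s * w x s * (wA 0 0)⁻¹) i j)
      ((((Complex.I * z) • Dh
          - (Dh * (ρ x t - B * (Pm x t)ᴴ * (S x t)⁻¹ * Pm x t)
              - (ρ x t - B * (Pm x t)ᴴ * (S x t)⁻¹ * Pm x t) * Dh))
        * (wA x t * w x t * (wA 0 0)⁻¹)) i j) t)
    ∧ wA 0 0 * w 0 0 * (wA 0 0)⁻¹ = 1 := by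
  have hBB : B * B = 1 := hB ▸ diagonal_mul_self_eq_one_of_sign hb
  have hAz : IsUnit (A - z • 1) := by
    simpa [Algebra.algebraMap_eq_smul_one] using (spectrum.notMem_iff.mp hz).neg
  obtain rfl := hD
  obtain rfl := hDh
  obtain rfl := hB
  obtain rfl : wA = _ := funext₂ hwA
  refine ⟨fun x t => ?_, fun x t => ?_, ?_⟩
  · exact ((hasEntrywiseDerivAt_darboux (hPmx x t) (hSx x t) (hSinv x t) (hid x t) hAz hBB
      (commute_diagonal _ _) (isHermitian_diagonal_ofReal d) (hρsym x t)).mul_of_gauge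
      (hwx x t) |>.mul_const _).congr_deriv (Matrix.mul_assoc _ _ _)
  · exact ((hasEntrywiseDerivAt_darboux (hPmt x t) (hSt x t) (hSinv x t) (hid x t) hAz hBB
      (commute_diagonal _ _) (isHermitian_diagonal_ofReal dh) (hρsym x t)).mul_of_gauge
      (hwt x t) |>.mul_const _).congr_deriv (Matrix.mul_assoc _ _ _)
  · rw [hw00, Matrix.mul_one, mul_nonsing_inv _ ((isUnit_iff_isUnit_det _).mp hwA00)]
end

section
/- Let D = diag(d₁,…,d_m) and D̂ = diag(d̂₁,…,d̂_m) be real diagonal m×m complex matrices, A ∈ M_n(ℂ), Π ∈ M_{n×m}(ℂ), and let ρ, ρₓ, ρₜ ∈ M_m(ℂ) satisfy the N-wave relation [D, ρₜ] − [D̂, ρₓ] = [[D,ρ],[D̂,ρ]]. Set F₁ := −iAΠD + Π[D,ρ] and F₂ := −iAΠD̂ + Π[D̂,ρ]. Then −iA F₂ D + F₂ [D,ρ] + Π[D, ρₜ] = −iA F₁ D̂ + F₁ [D̂,ρ] + Π[D̂, ρₓ]. (This is the necessary compatibility condition Π_{xt} = Π_{tx} of the GBDT equations, i.e. the conservation law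 (−iAΠD + Π[D,ρ])_t = (−iAΠD̂ + Π[D̂,ρ])_x.) -/
open Matrix

/-- The necessary compatibility condition `Π_{xt} = Π_{tx}` of the GBDT equations:
the conservation law `(−iAΠD + Π[D,ρ])_t = (−iAΠD̂ + Π[D̂,ρ])_x`. -/
theorem stmt_8 {n m : ℕ}
    (d dh : Fin m → ℝ)
    (D Dh : Matrix (Fin m) (Fin m) ℂ)
    (hD : D = Matrix.diagonal (fun k => (d k : ℂ)))
    (hDh : Dh = Matrix.diagonal (fun k => (dh k : ℂ)))
    (A : Matrix (Fin n) (Fin n) ℂ)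
    (Pm : Matrix (Fin n) (Fin m) ℂ)
    (ρ ρx ρt : Matrix (Fin m) (Fin m) ℂ)
    (hNwave : (D * ρt - ρt * D) - (Dh * ρx - ρx * Dh)
      = (D * ρ - ρ * D) * (Dh * ρ - ρ * Dh) - (Dh * ρ - ρ * Dh) * (D * ρ - ρ * D))
    (F₁ F₂ : Matrix (Fin n) (Fin m) ℂ)
    (hF₁ : F₁ = (-Complex.I) • (A * Pm * D) + Pm * (D * ρ - ρ * D))
    (hF₂ : F₂ = (-Complex.I) • (A * Pm * Dh) + Pm * (Dh * ρ - ρ * Dh)) :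
    (-Complex.I) • (A * F₂ * D) + F₂ * (D * ρ - ρ * D) + Pm * (D * ρt - ρt * D)
      = (-Complex.I) • (A * F₁ * Dh) + F₁ * (Dh * ρ - ρ * Dh) + Pm * (Dh * ρx - ρx * Dh) := by
  have hcomm : D * Dh = Dh * D := by
    subst hD hDh
    simp [Matrix.diagonal_mul_diagonal, mul_comm]
  have hkey : Pm * (D * ρt - ρt * D)
      = Pm * (Dh * ρx - ρx * Dh)
        + Pm * ((D * ρ - ρ * D) * (Dh * ρ - ρ * Dh))
        - Pm * ((Dh * ρ - ρ * Dh) * (D * ρ - ρ * D)) := by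
    rw [← Matrix.mul_add, ← Matrix.mul_sub]
    congr 1
    linear_combination (norm := noncomm_ring) hNwave
  subst hF₁ hF₂
  rw [hkey]
  simp only [Matrix.mul_add, Matrix.add_mul, Matrix.mul_smul, Matrix.smul_mul,
    smul_add, Matrix.mul_sub, Matrix.sub_mul, smul_sub, Matrix.mul_assoc]
  rw [hcomm]
  simp only [← Matrix.mul_assoc]
  have h3 : A * Pm * Dh * D = A * Pm * D * Dh := by
    rw [Matrix.mul_assoc (A * Pm), ← hcomm, ← Matrix.mul_assoc]
  rw [h3]
  abel
end

section
/- Let D = diag(d₁,…,d_m) and D̂ = diag(d̂₁,…,d̂_m) be real diagonal m×m complex matrices, B = diag(b₁,…,b_m) with each b_k = ±1, A ∈ M_n(ℂ), Π ∈ M_{n×m}(ℂ), and let ρ ∈ M_m(ℂ) satisfy ρ* = BρB (equivalently Bρ* = ρB). Set F₁ := −iAΠD + Π[D,ρ] and F₂ := −iAΠD̂ + Π[D̂,ρ]. Then F₂ D B Π* + Π D B (i D̂ Π* A* + [ρ*, D̂] Π*) = F₁ D̂ B Π* + Π D̂ B (i D Π* A* + [ρ*, D] Π*). (This is the necessary compatibility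 condition S_{xt} = S_{tx} of the GBDT equations, i.e. the conservation law (ΠDBΠ*)_t = (ΠD̂BΠ*)_x.) -/
open Matrix

/-- The necessary compatibility condition `S_{xt} = S_{tx}` of the GBDT equations:
the conservation law `(ΠDBΠ*)_t = (ΠD̂BΠ*)_x`. -/
theorem stmt_9 {n m : ℕ}
    (d dh b : Fin m → ℝ) (hb : ∀ k, b k = 1 ∨ b k = -1)
    (D Dh B : Matrix (Fin m) (Fin m) ℂ)
    (hD : D = Matrix.diagonal (fun k => (d k : ℂ)))
    (hDh : Dh = Matrix.diagonal (fun k => (dh k : ℂ)))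
    (hB : B = Matrix.diagonal (fun k => (b k : ℂ)))
    (A : Matrix (Fin n) (Fin n) ℂ)
    (Pm : Matrix (Fin n) (Fin m) ℂ)
    (ρ : Matrix (Fin m) (Fin m) ℂ)
    (hρ : ρᴴ = B * ρ * B)
    (F₁ F₂ : Matrix (Fin n) (Fin m) ℂ)
    (hF₁ : F₁ = (-Complex.I) • (A * Pm * D) + Pm * (D * ρ - ρ * D))
    (hF₂ : F₂ = (-Complex.I) • (A * Pm * Dh) + Pm * (Dh * ρ - ρ * Dh)) :
    F₂ * D * B * Pmᴴ
        + Pm * D * B * (Complex.I • (Dh * Pmᴴ * Aᴴ) + (ρᴴ * Dh - Dh * ρᴴ) * Pmᴴ)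
      = F₁ * Dh * B * Pmᴴ
        + Pm * Dh * B * (Complex.I • (D * Pmᴴ * Aᴴ) + (ρᴴ * D - D * ρᴴ) * Pmᴴ) := by
  have hDDh : D * Dh = Dh * D := by
    rw [hD, hDh]; simp [Matrix.diagonal_mul_diagonal, mul_comm]
  have hBD : B * D = D * B := by
    rw [hB, hD]; simp [Matrix.diagonal_mul_diagonal, mul_comm]
  have hBDh : B * Dh = Dh * B := by
    rw [hB, hDh]; simp [Matrix.diagonal_mul_diagonal, mul_comm]
  have hBB : B * B = 1 := by
    rw [hB, Matrix.diagonal_mul_diagonal]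
    have : (fun k => (b k : ℂ) * (b k : ℂ)) = fun _ => (1 : ℂ) :=
      funext fun k => by rcases hb k with h | h <;> simp [h]
    rw [this, Matrix.diagonal_one]
  have r1 : ∀ (X : Matrix (Fin m) (Fin n) ℂ), D * (Dh * X) = Dh * (D * X) := by
    intro X; rw [← Matrix.mul_assoc, hDDh, Matrix.mul_assoc]
  have r2 : ∀ (X : Matrix (Fin m) (Fin n) ℂ), B * (D * X) = D * (B * X) := by
    intro X; rw [← Matrix.mul_assoc, hBD, Matrix.mul_assoc]
  have r3 : ∀ (X : Matrix (Fin m) (Fin n) ℂ), B * (Dh * X) = Dh * (B * X) := by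
    intro X; rw [← Matrix.mul_assoc, hBDh, Matrix.mul_assoc]
  have r4 : ∀ (X : Matrix (Fin m) (Fin n) ℂ), B * (B * X) = X := by
    intro X; rw [← Matrix.mul_assoc, hBB, Matrix.one_mul]
  rw [hF₁, hF₂, hρ]
  simp only [Matrix.add_mul, Matrix.sub_mul, Matrix.mul_add, Matrix.mul_sub,
    Matrix.smul_mul, Matrix.mul_smul, Matrix.mul_assoc]
  simp only [r1, r2, r3, r4]
  abel
end

section
/- Let D = diag(d₁,…,d_m) and B = diag(b₁,…,b_m) be real diagonal m×m matrices with b_k = ±1, let A ∈ M_n(ℂ) satisfy A = −Ā (entrywise complex conjugate), and let ρ : ℝ → M_m(ℂ) be real-valued (ρ(x) = conj ρ(x) for all x). If Π : ℝ → M_{n×m}(ℂ) and S : ℝ → M_n(ℂ) are differentiable and satisfy Π′ = −iAΠD + Π[D,ρ] and S′ = ΠDBΠ*, then the entrywise conjugates Π̄(x) := conj Π(x) and S̄(x) := conj S(x) satisfy the same system: Π̄′ = −iAΠ̄D + Π̄[D,ρ] and S̄′ = Π̄DBΠ̄*. Consequently, if moreover Π(x) and S(x) are real-valued and S(x) is invertible,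 then the transformed potential ρ̃(x) = ρ(x) − BΠ(x)*S(x)^{-1}Π(x) is real-valued. -/
open Matrix

lemma conj_smul_map {p q : ℕ} (c : ℂ) (M : Matrix (Fin p) (Fin q) ℂ) :
    (c • M).map (starRingEnd ℂ) = (starRingEnd ℂ c) • M.map (starRingEnd ℂ) := by
  ext i j; simp [Matrix.map_apply]

lemma conj_add_map {p q : ℕ} (M N : Matrix (Fin p) (Fin q) ℂ) :
    (M + N).map (starRingEnd ℂ) = M.map (starRingEnd ℂ) + N.map (starRingEnd ℂ) := by
  ext i j; simp [Matrix.map_apply]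

lemma conj_sub_map {p q : ℕ} (M N : Matrix (Fin p) (Fin q) ℂ) :
    (M - N).map (starRingEnd ℂ) = M.map (starRingEnd ℂ) - N.map (starRingEnd ℂ) := by
  ext i j; simp [Matrix.map_apply]

/-- In the real-valued case (`ρ` real, `A = −Ā`), the entrywise conjugates of `Π` and `S`
satisfy the same GBDT system; consequently, if `Π` and `S` are real-valued and `S` is
invertible, the transformed potential `ρ̃ = ρ − BΠ*S⁻¹Π` is real-valued. -/
theorem stmt_10 {n m : ℕ}
    (d b : Fin m → ℝ) (hb : ∀ k, b k = 1 ∨ b k = -1)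
    (D B : Matrix (Fin m) (Fin m) ℂ)
    (hD : D = Matrix.diagonal (fun k => (d k : ℂ)))
    (hB : B = Matrix.diagonal (fun k => (b k : ℂ)))
    (A : Matrix (Fin n) (Fin n) ℂ)
    (hA : A.map (starRingEnd ℂ) = -A)
    (ρ : ℝ → Matrix (Fin m) (Fin m) ℂ)
    (hρreal : ∀ x, (ρ x).map (starRingEnd ℂ) = ρ x)
    (Pm : ℝ → Matrix (Fin n) (Fin m) ℂ)
    (S : ℝ → Matrix (Fin n) (Fin n) ℂ)
    (hPm : ∀ x i j, HasDerivAt (fun y => Pm y i j)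
      (((-Complex.I) • (A * Pm x * D) + Pm x * (D * ρ x - ρ x * D)) i j) x)
    (hS : ∀ x i j, HasDerivAt (fun y => S y i j)
      ((Pm x * D * B * (Pm x)ᴴ) i j) x) :
    (∀ x i j, HasDerivAt (fun y => ((Pm y).map (starRingEnd ℂ)) i j)
      (((-Complex.I) • (A * (Pm x).map (starRingEnd ℂ) * D)
        + (Pm x).map (starRingEnd ℂ) * (D * ρ x - ρ x * D)) i j) x)
    ∧ (∀ x i j, HasDerivAt (fun y => ((S y).map (starRingEnd ℂ)) i j)
      (((Pm x).map (starRingEnd ℂ) * D * B * ((Pm x).map (starRingEnd ℂ))ᴴ) i j) x)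
    ∧ ((∀ x, (Pm x).map (starRingEnd ℂ) = Pm x) →
        (∀ x, (S x).map (starRingEnd ℂ) = S x) →
        (∀ x, IsUnit (S x)) →
        ∀ x, (ρ x - B * (Pm x)ᴴ * (S x)⁻¹ * Pm x).map (starRingEnd ℂ)
          = ρ x - B * (Pm x)ᴴ * (S x)⁻¹ * Pm x) := by
  have cD : D.map (starRingEnd ℂ) = D := by
    subst hD
    rw [Matrix.diagonal_map (by simp)]
    simp
  have cB : B.map (starRingEnd ℂ) = B := by
    subst hB
    rw [Matrix.diagonal_map (by simp)]
    simp
  refine ⟨?_, ?_, ?_⟩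
  · intro x i j
    have h := (hPm x i j).star
    have key : ((-Complex.I) • (A * Pm x * D)
        + Pm x * (D * ρ x - ρ x * D)).map (starRingEnd ℂ)
        = (-Complex.I) • (A * (Pm x).map (starRingEnd ℂ) * D)
          + (Pm x).map (starRingEnd ℂ) * (D * ρ x - ρ x * D) := by
      rw [conj_add_map, conj_smul_map, Matrix.map_mul, Matrix.map_mul, Matrix.map_mul,
        conj_sub_map, Matrix.map_mul, Matrix.map_mul, hA, cD, hρreal]
      simp [Matrix.neg_mul, Matrix.mul_neg]
    have : star (((-Complex.I) • (A * Pm x * D) + Pm x * (D * ρ x - ρ x * D)) i j)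
        = (((-Complex.I) • (A * (Pm x).map (starRingEnd ℂ) * D)
          + (Pm x).map (starRingEnd ℂ) * (D * ρ x - ρ x * D)) i j) := by
      rw [← key]; rfl
    rw [this] at h
    exact h
  · intro x i j
    have h := (hS x i j).star
    have key : (Pm x * D * B * (Pm x)ᴴ).map (starRingEnd ℂ)
        = (Pm x).map (starRingEnd ℂ) * D * B * ((Pm x).map (starRingEnd ℂ))ᴴ := by
      have hPH : ((Pm x)ᴴ).map (starRingEnd ℂ) = ((Pm x).map (starRingEnd ℂ))ᴴ := by
        ext i j; simp [Matrix.map_apply, Matrix.conjTranspose_apply, Complex.star_def]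
      rw [Matrix.map_mul, Matrix.map_mul, Matrix.map_mul, cD, cB, hPH]
    have : star ((Pm x * D * B * (Pm x)ᴴ) i j)
        = (((Pm x).map (starRingEnd ℂ) * D * B * ((Pm x).map (starRingEnd ℂ))ᴴ) i j) := by
      rw [← key]; rfl
    rw [this] at h
    exact h
  · intro hP hSreal _ x
    have cSinv : ((S x)⁻¹).map (starRingEnd ℂ) = (S x)⁻¹ := by
      have : ((S x)⁻¹).map (starRingEnd ℂ) = (((S x)⁻¹)ᴴ)ᵀ := by
        ext i j; simp [Matrix.conjTranspose_apply, Matrix.map_apply]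
      rw [this, Matrix.conjTranspose_nonsing_inv, Matrix.transpose_nonsing_inv]
      have : (S x)ᴴᵀ = (S x).map (starRingEnd ℂ) := by
        ext i j; simp [Matrix.conjTranspose_apply, Matrix.map_apply]
      rw [this, hSreal]
    have cPH : ((Pm x)ᴴ).map (starRingEnd ℂ) = (Pm x)ᴴ := by
      ext i j
      have := congrFun (congrFun (hP x) j) i
      simp only [Matrix.map_apply] at this
      simp [Matrix.map_apply, Matrix.conjTranspose_apply, Complex.star_def, this]
    rw [conj_sub_map, Matrix.map_mul, Matrix.map_mul, Matrix.map_mul,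
      hρreal, cB, cPH, cSinv, hP]
end

section
/- Let m = 3, D = diag(d₁,d₂,d₃) and D̂ = diag(d̂₁,d̂₂,d̂₃) real diagonal with d₁ > d₂ > d₃, and let ρ : ℝ² → M₃(ℂ) be continuously differentiable with ρ(x,t)* = ρ(x,t), satisfying the N-wave equation [D, ρₜ] − [D̂, ρₓ] = [[D,ρ],[D̂,ρ]]. Define ψ₁ = (d̂₂ − d̂₁)/(d₁ − d₂), ψ₂ = (d̂₃ − d̂₂)/(d₂ − d₃), ψ₃ = (d̂₃ − d̂₁)/(d₁ − d₃); φ₁ = −i √(d₁−d₂) ρ₁₂, φ₂ = −i √(d₂−d₃) ρ₂₃, φ₃ = −i √(d₁−d₃) ρ₁₃; and ε = (d₁d̂₂ − d₂d̂₁ + d₂d̂₃ − d₃d̂₂ + d₃d̂₁ − d₁d̂₃) · ((d₁−d₂)(d₁−d₃)(d₂−d₃))^{−1/2}. Then the three-wave interaction equations hold: (φ₁)ₜ + ψ₁(φ₁)ₓ = i ε conj(φ₂) φ₃, (φ₂)ₜ + ψ₂(φ₂)ₓ = i ε conj(φ₁) φ₃, (φ₃)ₜ + ψ₃(φ₃)ₓ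 = i ε φ₁ φ₂. -/
open Matrix

/-- The Hermitian (`m = 3`, `B = I₃`) case of the N-wave equation is equivalent to the
standard three-wave interaction equations for
`φ₁ = −i√(d₁−d₂)ρ₁₂`, `φ₂ = −i√(d₂−d₃)ρ₂₃`, `φ₃ = −i√(d₁−d₃)ρ₁₃`. -/
theorem stmt_11
    (d dh : Fin 3 → ℝ) (h12 : d 0 > d 1) (h23 : d 1 > d 2)
    (D Dh : Matrix (Fin 3) (Fin 3) ℂ)
    (hD : D = Matrix.diagonal (fun k => (d k : ℂ)))
    (hDh : Dh = Matrix.diagonal (fun k => (dh k : ℂ)))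
    (ρ ρx ρt : ℝ → ℝ → Matrix (Fin 3) (Fin 3) ℂ)
    (hρherm : ∀ x t, (ρ x t)ᴴ = ρ x t)
    (hρx : ∀ x t i j, HasDerivAt (fun y => ρ y t i j) (ρx x t i j) x)
    (hρt : ∀ x t i j, HasDerivAt (fun s => ρ x s i j) (ρt x t i j) t)
    (hρxcont : ∀ i j, Continuous fun p : ℝ × ℝ => ρx p.1 p.2 i j)
    (hρtcont : ∀ i j, Continuous fun p : ℝ × ℝ => ρt p.1 p.2 i j)
    (hNwave : ∀ x t,
      (D * ρt x t - ρt x t * D) - (Dh * ρx x t - ρx x t * Dh)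
        = (D * ρ x t - ρ x t * D) * (Dh * ρ x t - ρ x t * Dh)
          - (Dh * ρ x t - ρ x t * Dh) * (D * ρ x t - ρ x t * D))
    (ψ₁ ψ₂ ψ₃ ε : ℝ)
    (hψ₁ : ψ₁ = (dh 1 - dh 0) / (d 0 - d 1))
    (hψ₂ : ψ₂ = (dh 2 - dh 1) / (d 1 - d 2))
    (hψ₃ : ψ₃ = (dh 2 - dh 0) / (d 0 - d 2))
    (hε : ε = (d 0 * dh 1 - d 1 * dh 0 + d 1 * dh 2 - d 2 * dh 1
        + d 2 * dh 0 - d 0 * dh 2)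
      / Real.sqrt ((d 0 - d 1) * (d 0 - d 2) * (d 1 - d 2)))
    (φ₁ φ₂ φ₃ : ℝ → ℝ → ℂ)
    (hφ₁ : ∀ x t, φ₁ x t = -Complex.I * (Real.sqrt (d 0 - d 1) : ℂ) * ρ x t 0 1)
    (hφ₂ : ∀ x t, φ₂ x t = -Complex.I * (Real.sqrt (d 1 - d 2) : ℂ) * ρ x t 1 2)
    (hφ₃ : ∀ x t, φ₃ x t = -Complex.I * (Real.sqrt (d 0 - d 2) : ℂ) * ρ x t 0 2) :
    ∀ x t,
      (-Complex.I * (Real.sqrt (d 0 - d 1) : ℂ) * ρt x t 0 1)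
          + (ψ₁ : ℂ) * (-Complex.I * (Real.sqrt (d 0 - d 1) : ℂ) * ρx x t 0 1)
        = Complex.I * (ε : ℂ) * (starRingEnd ℂ) (φ₂ x t) * φ₃ x t
      ∧ (-Complex.I * (Real.sqrt (d 1 - d 2) : ℂ) * ρt x t 1 2)
          + (ψ₂ : ℂ) * (-Complex.I * (Real.sqrt (d 1 - d 2) : ℂ) * ρx x t 1 2)
        = Complex.I * (ε : ℂ) * (starRingEnd ℂ) (φ₁ x t) * φ₃ x t
      ∧ (-Complex.I * (Real.sqrt (d 0 - d 2) : ℂ) * ρt x t 0 2)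
          + (ψ₃ : ℂ) * (-Complex.I * (Real.sqrt (d 0 - d 2) : ℂ) * ρx x t 0 2)
        = Complex.I * (ε : ℂ) * φ₁ x t * φ₂ x t := by
  intro x t
  have ha : (0:ℝ) < d 0 - d 1 := by linarith
  have hb : (0:ℝ) < d 1 - d 2 := by linarith
  have hcp : (0:ℝ) < d 0 - d 2 := by linarith
  set s1 := Real.sqrt (d 0 - d 1) with hs1def
  set s2 := Real.sqrt (d 1 - d 2) with hs2def
  set s3 := Real.sqrt (d 0 - d 2) with hs3def
  have hs1 : (s1:ℂ)^2 = (d 0 : ℂ) - d 1 := by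
    have := Real.sq_sqrt ha.le
    rw [hs1def]; exact_mod_cast congrArg Complex.ofReal this
  have hs2 : (s2:ℂ)^2 = (d 1 : ℂ) - d 2 := by
    have := Real.sq_sqrt hb.le
    rw [hs2def]; exact_mod_cast congrArg Complex.ofReal this
  have hs3 : (s3:ℂ)^2 = (d 0 : ℂ) - d 2 := by
    have := Real.sq_sqrt hcp.le
    rw [hs3def]; exact_mod_cast congrArg Complex.ofReal this
  have hs1pos : 0 < s1 := Real.sqrt_pos.2 ha
  have hs2pos : 0 < s2 := Real.sqrt_pos.2 hb
  have hs3pos : 0 < s3 := Real.sqrt_pos.2 hcp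
  have hs1ne : (s1:ℂ) ≠ 0 := Complex.ofReal_ne_zero.2 (ne_of_gt hs1pos)
  have hs2ne : (s2:ℂ) ≠ 0 := Complex.ofReal_ne_zero.2 (ne_of_gt hs2pos)
  have hs3ne : (s3:ℂ) ≠ 0 := Complex.ofReal_ne_zero.2 (ne_of_gt hs3pos)
  have hsplit : Real.sqrt ((d 0 - d 1) * (d 0 - d 2) * (d 1 - d 2)) = s1 * s3 * s2 := by
    rw [Real.sqrt_mul (by positivity), Real.sqrt_mul ha.le]
  have hp1R : ψ₁ * (d 0 - d 1) = dh 1 - dh 0 := by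
    rw [hψ₁]; field_simp
  have hp2R : ψ₂ * (d 1 - d 2) = dh 2 - dh 1 := by
    rw [hψ₂]; field_simp
  have hp3R : ψ₃ * (d 0 - d 2) = dh 2 - dh 0 := by
    rw [hψ₃]; field_simp
  have hp1 : (ψ₁:ℂ) * ((d 0:ℂ) - d 1) = (dh 1:ℂ) - dh 0 := by exact_mod_cast congrArg Complex.ofReal hp1R
  have hp2 : (ψ₂:ℂ) * ((d 1:ℂ) - d 2) = (dh 2:ℂ) - dh 1 := by exact_mod_cast congrArg Complex.ofReal hp2R
  have hp3 : (ψ₃:ℂ) * ((d 0:ℂ) - d 2) = (dh 2:ℂ) - dh 0 := by exact_mod_cast congrArg Complex.ofReal hp3R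
  have heR : ε * (s1 * s3 * s2) = d 0 * dh 1 - d 1 * dh 0 + d 1 * dh 2 - d 2 * dh 1
      + d 2 * dh 0 - d 0 * dh 2 := by
    rw [hε, hsplit]
    field_simp
  have he : (ε:ℂ) * ((s1:ℂ) * s3 * s2) = (d 0:ℂ) * dh 1 - (d 1:ℂ) * dh 0 + (d 1:ℂ) * dh 2
      - (d 2:ℂ) * dh 1 + (d 2:ℂ) * dh 0 - (d 0:ℂ) * dh 2 := by
    exact_mod_cast congrArg Complex.ofReal heR
  have key := hNwave x t
  subst hD hDh
  have h21 : (starRingEnd ℂ) (ρ x t 1 2) = ρ x t 2 1 := by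
    have := Matrix.ext_iff.2 (hρherm x t) 2 1
    simpa [Matrix.conjTranspose_apply] using this
  have h10 : (starRingEnd ℂ) (ρ x t 0 1) = ρ x t 1 0 := by
    have := Matrix.ext_iff.2 (hρherm x t) 1 0
    simpa [Matrix.conjTranspose_apply] using this
  have e01 := Matrix.ext_iff.2 key 0 1
  have e12 := Matrix.ext_iff.2 key 1 2
  have e02 := Matrix.ext_iff.2 key 0 2
  simp only [Matrix.sub_apply, Matrix.mul_apply, Fin.sum_univ_three,
    Matrix.diagonal_apply_eq, Matrix.diagonal_apply_ne, Matrix.diagonal_apply,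
    Fin.isValue] at e01 e12 e02
  norm_num [Fin.ext_iff] at e01 e12 e02
  refine ⟨?_, ?_, ?_⟩
  · rw [hφ₂, hφ₃]
    simp only [_root_.map_mul, _root_.map_neg, Complex.conj_I, Complex.conj_ofReal, h21]
    refine mul_left_cancel₀ hs1ne ?_
    linear_combination (-Complex.I) * e01
      + (-Complex.I * ρt x t 0 1 - Complex.I * (ψ₁:ℂ) * ρx x t 0 1) * hs1
      + (-Complex.I * ρx x t 0 1) * hp1
      + (-Complex.I * (ρ x t 2 1 * ρ x t 0 2)) * he
      + ((s1:ℂ) * s2 * s3 * (ε:ℂ) * Complex.I * (ρ x t 0 2 * ρ x t 2 1)) * Complex.I_sq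
  · rw [hφ₁, hφ₃]
    simp only [_root_.map_mul, _root_.map_neg, Complex.conj_I, Complex.conj_ofReal, h10]
    refine mul_left_cancel₀ hs2ne ?_
    linear_combination (-Complex.I) * e12
      + (-Complex.I * ρt x t 1 2 - Complex.I * (ψ₂:ℂ) * ρx x t 1 2) * hs2
      + (-Complex.I * ρx x t 1 2) * hp2
      + (-Complex.I * (ρ x t 1 0 * ρ x t 0 2)) * he
      + ((s1:ℂ) * s2 * s3 * (ε:ℂ) * Complex.I * (ρ x t 1 0 * ρ x t 0 2)) * Complex.I_sq
  · rw [hφ₁, hφ₂]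
    refine mul_left_cancel₀ hs3ne ?_
    linear_combination (-Complex.I) * e02
      + (-Complex.I * ρt x t 0 2 - Complex.I * (ψ₃:ℂ) * ρx x t 0 2) * hs3
      + (-Complex.I * ρx x t 0 2) * hp3
      + (Complex.I * (ρ x t 0 1 * ρ x t 1 2)) * he
      + (-(s1:ℂ) * s2 * s3 * (ε:ℂ) * Complex.I * (ρ x t 0 1 * ρ x t 1 2)) * Complex.I_sq
end

section
/- Let m = 3, D = diag(d₁,d₂,d₃) and D̂ = diag(d̂₁,d̂₂,d̂₃) real diagonal with d₁ > d₂ > d₃, and let ρ : ℝ² → M₃(ℝ) be a continuously differentiable real symmetric matrix function (ρᵀ = ρ) satisfying the N-wave equation [D, ρₜ] − [D̂, ρₓ] = [[D,ρ],[D̂,ρ]]. Define ψ₁ = (d̂₂ − d̂₁)/(d₁ − d₂), ψ₂ = (d̂₃ − d̂₂)/(d₂ − d₃), ψ₃ = (d̂₃ − d̂₁)/(d₁ − d₃); the real-valued functions φ₁ = −√(d₁−d₂) ρ₁₂, φ₂ = −√(d₂−d₃) ρ₂₃, φ₃ = −√(d₁−d₃) ρ₁₃; and ε = (d₁d̂₂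 − d₂d̂₁ + d₂d̂₃ − d₃d̂₂ + d₃d̂₁ − d₁d̂₃) · ((d₁−d₂)(d₁−d₃)(d₂−d₃))^{−1/2}. Then the exact-resonance three-wave equations hold: (φ₁)ₜ + ψ₁(φ₁)ₓ = ε φ₂ φ₃, (φ₂)ₜ + ψ₂(φ₂)ₓ = ε φ₁ φ₃, (φ₃)ₜ + ψ₃(φ₃)ₓ = −ε φ₁ φ₂. -/
open Matrix

/-!
Commutators with diagonal matrices act entrywise, `[diag d, A]ᵢⱼ = (dᵢ - dⱼ) Aᵢⱼ`, so the `(i, j)`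
entry of the N-wave equation is
`(dᵢ - dⱼ) ∂ₜρᵢⱼ - (d̂ᵢ - d̂ⱼ) ∂ₓρᵢⱼ = ∑ₖ cᵢₖⱼ ρᵢₖ ρₖⱼ` with
`cᵢₖⱼ = (dᵢ - dₖ)(d̂ₖ - d̂ⱼ) - (d̂ᵢ - d̂ₖ)(dₖ - dⱼ)`.
For `m = 3` and `i ≠ j` only the third index `k` contributes, and `cᵢₖⱼ = ±σ`, where `σ`, the
numerator of `ε`, is twice the signed area of the triangle with vertices `(dₖ, d̂ₖ)`. Dividing by
`√(dᵢ - dⱼ)` and using `ε √(d₁-d₂) √(d₁-d₃) √(d₂-d₃) = σ` gives the three-wave equations.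
-/

namespace Matrix

variable {n R : Type*} [Fintype n] [DecidableEq n] [CommRing R]

theorem diagonal_mul_sub_mul_diagonal_apply (d : n → R) (A : Matrix n n R) (i j : n) :
    (diagonal d * A - A * diagonal d) i j = (d i - d j) * A i j := by
  simp only [sub_apply, diagonal_mul, mul_diagonal]
  ring

theorem commutator_diagonal_commutator_diagonal_apply (d e : n → R) (A : Matrix n n R) (i j : n) :
    ((diagonal d * A - A * diagonal d) * (diagonal e * A - A * diagonal e)
        - (diagonal e * A - A * diagonal e) * (diagonal d * A - A * diagonal d)) i j
      = ∑ k, ((d i - d k) * (e k - e j) - (e i - e k) * (d k - d j)) * (A i k * A k j) := by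
  rw [sub_apply, mul_apply, mul_apply, ← Finset.sum_sub_distrib]
  simp only [diagonal_mul_sub_mul_diagonal_apply]
  exact Finset.sum_congr rfl fun k _ => by ring

theorem nWave_apply {d e : n → R} {A At Ax : Matrix n n R}
    (h : (diagonal d * At - At * diagonal d) - (diagonal e * Ax - Ax * diagonal e)
      = (diagonal d * A - A * diagonal d) * (diagonal e * A - A * diagonal e)
        - (diagonal e * A - A * diagonal e) * (diagonal d * A - A * diagonal d))
    (i j : n) :
    (d i - d j) * At i j - (e i - e j) * Ax i j
      = ∑ k, ((d i - d k) * (e k - e j) - (e i - e k) * (d k - d j)) * (A i k * A k j) := by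
  rw [← commutator_diagonal_commutator_diagonal_apply, ← h, sub_apply,
    diagonal_mul_sub_mul_diagonal_apply, diagonal_mul_sub_mul_diagonal_apply]

end Matrix

theorem neg_sqrt_mul_add_div_mul_neg_sqrt_mul {a δ u v r : ℝ} (ha : 0 < a)
    (h : a * u + δ * v = -(√a * r)) :
    -√a * u + δ / a * (-√a * v) = r := by
  have hs : √a ^ 2 = a := Real.sq_sqrt ha.le
  have hs0 : √a ≠ 0 := (Real.sqrt_pos.2 ha).ne'
  field_simp
  linear_combination (-√a) * h + r * hs

theorem div_sqrt_mul_sqrt_mul_sqrt {a b c σ : ℝ} (ha : 0 < a) (hb : 0 < b) (hc : 0 < c) :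
    σ / √(a * b * c) * (√a * √b * √c) = σ := by
  rw [Real.sqrt_mul (by positivity), Real.sqrt_mul ha.le]
  exact div_mul_cancel₀ σ (by positivity)

theorem stmt_12_general
    (d dh : Fin 3 → ℝ) (h12 : d 0 > d 1) (h23 : d 1 > d 2)
    (D Dh : Matrix (Fin 3) (Fin 3) ℝ)
    (hD : D = Matrix.diagonal d)
    (hDh : Dh = Matrix.diagonal dh)
    (ρ ρx ρt : ℝ → ℝ → Matrix (Fin 3) (Fin 3) ℝ)
    (hρsym : ∀ x t, (ρ x t)ᵀ = ρ x t)
    (hNwave : ∀ x t,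
      (D * ρt x t - ρt x t * D) - (Dh * ρx x t - ρx x t * Dh)
        = (D * ρ x t - ρ x t * D) * (Dh * ρ x t - ρ x t * Dh)
          - (Dh * ρ x t - ρ x t * Dh) * (D * ρ x t - ρ x t * D))
    (ψ₁ ψ₂ ψ₃ ε : ℝ)
    (hψ₁ : ψ₁ = (dh 1 - dh 0) / (d 0 - d 1))
    (hψ₂ : ψ₂ = (dh 2 - dh 1) / (d 1 - d 2))
    (hψ₃ : ψ₃ = (dh 2 - dh 0) / (d 0 - d 2))
    (hε : ε = (d 0 * dh 1 - d 1 * dh 0 + d 1 * dh 2 - d 2 * dh 1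
        + d 2 * dh 0 - d 0 * dh 2)
      / Real.sqrt ((d 0 - d 1) * (d 0 - d 2) * (d 1 - d 2)))
    (φ₁ φ₂ φ₃ : ℝ → ℝ → ℝ)
    (hφ₁ : ∀ x t, φ₁ x t = -Real.sqrt (d 0 - d 1) * ρ x t 0 1)
    (hφ₂ : ∀ x t, φ₂ x t = -Real.sqrt (d 1 - d 2) * ρ x t 1 2)
    (hφ₃ : ∀ x t, φ₃ x t = -Real.sqrt (d 0 - d 2) * ρ x t 0 2) :
    ∀ x t,
      (-Real.sqrt (d 0 - d 1) * ρt x t 0 1)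
          + ψ₁ * (-Real.sqrt (d 0 - d 1) * ρx x t 0 1)
        = ε * φ₂ x t * φ₃ x t
      ∧ (-Real.sqrt (d 1 - d 2) * ρt x t 1 2)
          + ψ₂ * (-Real.sqrt (d 1 - d 2) * ρx x t 1 2)
        = ε * φ₁ x t * φ₃ x t
      ∧ (-Real.sqrt (d 0 - d 2) * ρt x t 0 2)
          + ψ₃ * (-Real.sqrt (d 0 - d 2) * ρx x t 0 2)
        = -ε * φ₁ x t * φ₂ x t := by
  intro x t
  have hd01 : 0 < d 0 - d 1 := sub_pos.2 h12
  have hd12 : 0 < d 1 - d 2 := sub_pos.2 h23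
  have hd02 : 0 < d 0 - d 2 := sub_pos.2 (h23.trans h12)
  have hεσ : ε * (√(d 0 - d 1) * √(d 0 - d 2) * √(d 1 - d 2))
      = d 0 * dh 1 - d 1 * dh 0 + d 1 * dh 2 - d 2 * dh 1 + d 2 * dh 0 - d 0 * dh 2 :=
    hε ▸ div_sqrt_mul_sqrt_mul_sqrt hd01 hd02 hd12
  have hN := hD ▸ hDh ▸ hNwave x t
  have E01 := nWave_apply hN 0 1
  have E12 := nWave_apply hN 1 2
  have E02 := nWave_apply hN 0 2
  simp only [Fin.sum_univ_three, sub_self, zero_mul, mul_zero, zero_add, add_zero]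
    at E01 E12 E02
  rw [IsSymm.apply (hρsym x t) 1 2] at E01
  rw [IsSymm.apply (hρsym x t) 0 1] at E12
  rw [hφ₁, hφ₂, hφ₃, hψ₁, hψ₂, hψ₃]
  refine ⟨neg_sqrt_mul_add_div_mul_neg_sqrt_mul hd01 ?_,
    neg_sqrt_mul_add_div_mul_neg_sqrt_mul hd12 ?_,
    neg_sqrt_mul_add_div_mul_neg_sqrt_mul hd02 ?_⟩
  · linear_combination E01 + ρ x t 0 2 * ρ x t 1 2 * hεσ
  · linear_combination E12 + ρ x t 0 1 * ρ x t 0 2 * hεσ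
  · linear_combination E02 - ρ x t 0 1 * ρ x t 1 2 * hεσ

/-- The real symmetric (`m = 3`) case of the N-wave equation yields the exact-resonance
three-wave equations for `φ₁ = −√(d₁−d₂)ρ₁₂`, `φ₂ = −√(d₂−d₃)ρ₂₃`, `φ₃ = −√(d₁−d₃)ρ₁₃`. -/
theorem stmt_12
    (d dh : Fin 3 → ℝ) (h12 : d 0 > d 1) (h23 : d 1 > d 2)
    (D Dh : Matrix (Fin 3) (Fin 3) ℝ)
    (hD : D = Matrix.diagonal d)
    (hDh : Dh = Matrix.diagonal dh)
    (ρ ρx ρt : ℝ → ℝ → Matrix (Fin 3) (Fin 3) ℝ)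
    (hρsym : ∀ x t, (ρ x t)ᵀ = ρ x t)
    (hρx : ∀ x t i j, HasDerivAt (fun y => ρ y t i j) (ρx x t i j) x)
    (hρt : ∀ x t i j, HasDerivAt (fun s => ρ x s i j) (ρt x t i j) t)
    (hρxcont : ∀ i j, Continuous fun p : ℝ × ℝ => ρx p.1 p.2 i j)
    (hρtcont : ∀ i j, Continuous fun p : ℝ × ℝ => ρt p.1 p.2 i j)
    (hNwave : ∀ x t,
      (D * ρt x t - ρt x t * D) - (Dh * ρx x t - ρx x t * Dh)
        = (D * ρ x t - ρ x t * D) * (Dh * ρ x t - ρ x t * Dh)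
          - (Dh * ρ x t - ρ x t * Dh) * (D * ρ x t - ρ x t * D))
    (ψ₁ ψ₂ ψ₃ ε : ℝ)
    (hψ₁ : ψ₁ = (dh 1 - dh 0) / (d 0 - d 1))
    (hψ₂ : ψ₂ = (dh 2 - dh 1) / (d 1 - d 2))
    (hψ₃ : ψ₃ = (dh 2 - dh 0) / (d 0 - d 2))
    (hε : ε = (d 0 * dh 1 - d 1 * dh 0 + d 1 * dh 2 - d 2 * dh 1
        + d 2 * dh 0 - d 0 * dh 2)
      / Real.sqrt ((d 0 - d 1) * (d 0 - d 2) * (d 1 - d 2)))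
    (φ₁ φ₂ φ₃ : ℝ → ℝ → ℝ)
    (hφ₁ : ∀ x t, φ₁ x t = -Real.sqrt (d 0 - d 1) * ρ x t 0 1)
    (hφ₂ : ∀ x t, φ₂ x t = -Real.sqrt (d 1 - d 2) * ρ x t 1 2)
    (hφ₃ : ∀ x t, φ₃ x t = -Real.sqrt (d 0 - d 2) * ρ x t 0 2) :
    ∀ x t,
      (-Real.sqrt (d 0 - d 1) * ρt x t 0 1)
          + ψ₁ * (-Real.sqrt (d 0 - d 1) * ρx x t 0 1)
        = ε * φ₂ x t * φ₃ x t
      ∧ (-Real.sqrt (d 1 - d 2) * ρt x t 1 2)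
          + ψ₂ * (-Real.sqrt (d 1 - d 2) * ρx x t 1 2)
        = ε * φ₁ x t * φ₃ x t
      ∧ (-Real.sqrt (d 0 - d 2) * ρt x t 0 2)
          + ψ₃ * (-Real.sqrt (d 0 - d 2) * ρx x t 0 2)
        = -ε * φ₁ x t * φ₂ x t :=
  stmt_12_general d dh h12 h23 D Dh hD hDh ρ ρx ρt hρsym hNwave ψ₁ ψ₂ ψ₃ ε hψ₁ hψ₂ hψ₃ hε φ₁ φ₂ φ₃
    hφ₁ hφ₂ hφ₃
end

section
/- Let A ∈ M_n(ℂ) and λ ∈ ℂ with (A − λ I_n)ⁿ = 0 (spectrum of A concentrated at λ), let B = diag(b₁,…,b_m) with b_k = ±1, let Π ∈ M_{n×m}(ℂ), and let S ∈ M_n(ℂ) be invertible. Let c₁,…,c_{n+1} ∈ ℂ, not all zero, satisfy Σ_{s=1}^{n+1} c_s (−1)^s k(k+1)⋯(k+s−1) = 0 for all 1 ≤ k ≤ n. Then the matrix function W(z) := I_m − i B Π* S^{-1} (A − z I_n)^{-1} Π satisfies Σ_{s=1}^{n+1} c_s (z − λ)^s W^{(s)}(z) = 0 for all z ≠ λ,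 where W^{(s)} denotes the s-th derivative in z taken entrywise. (Hence the system W_x = (izD − [D,ρ̃])W − izWD with GBDT-generated ρ̃ and ρ ≡ 0 is bispectral: B(z)w_A = 0 for B(z) = Σ c_s(z−λ)^s ∂^s/∂z^s.) -/
/-!
Since `A - λ` is nilpotent, the resolvent is a polynomial in `(z - λ)⁻¹`:
`(A - z)⁻¹ = -∑_{k<n} (z - λ)^{-(k+1)} (A - λ)^k` (a finite geometric series). Hence every entry
of `W` is a constant plus a combination of the powers `(z - λ)^{-k}`, `1 ≤ k ≤ n`. The operator
`∑ c_s (z - λ)^s ∂^s` (with `s ≥ 1`) kills the constant and multiplies `(z - λ)^{-k}` by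
`∑ c_s (-1)^s k(k+1)⋯(k+s-1)`, which vanishes by hypothesis.
-/

open Matrix Finset Filter Topology

theorem inv_sub_smul_one_eq_neg_sum_of_pow_eq_zero {ι K : Type*} [Fintype ι] [DecidableEq ι]
    [Field K] {N : Matrix ι ι K} {n : ℕ} (hN : N ^ n = 0) {t : K} (ht : t ≠ 0) :
    (N - t • 1)⁻¹ = -∑ k ∈ range n, t ^ (-((k + 1 : ℕ) : ℤ)) • N ^ k := by
  have hsum : ∑ k ∈ range n, t ^ (-((k + 1 : ℕ) : ℤ)) • N ^ k
      = t⁻¹ • ∑ k ∈ range n, (t⁻¹ • N) ^ k := by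
    rw [smul_sum]
    refine sum_congr rfl fun k _ => ?_
    rw [smul_pow, smul_smul, ← pow_succ', inv_pow, _root_.zpow_neg, zpow_natCast]
  have hfactor : N - t • 1 = -t • (1 - t⁻¹ • N) := by
    rw [smul_sub, smul_smul, neg_mul, mul_inv_cancel₀ ht]
    module
  refine inv_eq_right_inv ?_
  rw [hsum, hfactor, mul_neg, smul_mul_smul_comm, neg_mul, mul_inv_cancel₀ ht, neg_smul, one_smul,
    neg_neg, mul_neg_geom_sum, smul_pow, hN, smul_zero, sub_zero]

theorem mul_resolvent_mul_eq_neg_sum {ι κ K : Type*} [Fintype ι] [DecidableEq ι] [Field K]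
    {A : Matrix ι ι K} {lam : K} {n : ℕ} (hA : (A - lam • 1) ^ n = 0) {w : K} (hw : w ≠ lam)
    (L : Matrix κ ι K) (R : Matrix ι κ K) :
    L * (A - w • 1)⁻¹ * R
      = -∑ k ∈ range n, (w - lam) ^ (-((k + 1 : ℕ) : ℤ)) • (L * (A - lam • 1) ^ k * R) := by
  have hshift : A - w • 1 = (A - lam • 1) - (w - lam) • 1 := by
    rw [sub_smul]; abel
  rw [hshift, inv_sub_smul_one_eq_neg_sum_of_pow_eq_zero hA (sub_ne_zero.2 hw), Matrix.mul_neg,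
    Matrix.neg_mul, Matrix.mul_sum, Matrix.sum_mul]
  simp only [Matrix.mul_smul, Matrix.smul_mul]

section Laurent

variable {𝕜 : Type*} [NontriviallyNormedField 𝕜]

theorem contDiffAt_sub_const_zpow (m : ℤ) (n : WithTop ℕ∞) {lam z : 𝕜} (hz : z ≠ lam) :
    ContDiffAt 𝕜 n (fun w => (w - lam) ^ m) z := by
  cases m with
  | ofNat k => simp only [Int.ofNat_eq_natCast, zpow_natCast]; fun_prop
  | negSucc k =>
    simp only [zpow_negSucc]
    exact (contDiffAt_id.sub contDiffAt_const).pow (k + 1) |>.inv (pow_ne_zero _ (sub_ne_zero.2 hz))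

theorem iteratedDeriv_sub_const_zpow (m : ℤ) (s : ℕ) (lam z : 𝕜) :
    iteratedDeriv s (fun w => (w - lam) ^ m) z
      = (∏ i ∈ range s, ((m : 𝕜) - i)) * (z - lam) ^ (m - s) := by
  rw [iteratedDeriv_comp_sub_const (f := fun w => w ^ m), iteratedDeriv_eq_iterate]
  exact iter_deriv_zpow m (z - lam) s

theorem sub_pow_mul_iteratedDeriv_sub_const_zpow_neg (k s : ℕ) {lam z : 𝕜} (hz : z ≠ lam) :
    (z - lam) ^ s * iteratedDeriv s (fun w => (w - lam) ^ (-(k : ℤ))) z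
      = (-1) ^ s * (∏ j ∈ range s, ((k + j : ℕ) : 𝕜)) * (z - lam) ^ (-(k : ℤ)) := by
  have hprod : ∏ i ∈ range s, (((-k : ℤ) : 𝕜) - i) = ∏ j ∈ range s, -((k + j : ℕ) : 𝕜) :=
    prod_congr rfl fun j _ => by push_cast; ring
  rw [iteratedDeriv_sub_const_zpow, hprod, prod_neg, card_range, ← zpow_natCast,
    mul_left_comm, mul_assoc, ← zpow_add₀ (sub_ne_zero.2 hz), add_sub_cancel, mul_assoc]

theorem iteratedDeriv_const_add_sum_mul_zpow {ι : Type*} (I : Finset ι) (d : 𝕜) (a : ι → 𝕜)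
    (e : ι → ℤ) {s : ℕ} (hs : s ≠ 0) {lam z : 𝕜} (hz : z ≠ lam) :
    iteratedDeriv s (fun w => d + ∑ k ∈ I, a k * (w - lam) ^ e k) z
      = ∑ k ∈ I, a k * iteratedDeriv s (fun w => (w - lam) ^ e k) z := by
  rw [iteratedDeriv_const_add (Nat.pos_of_ne_zero hs), iteratedDeriv_fun_sum]
  · simp only [iteratedDeriv_const_mul_field]
  · exact fun k _ => contDiffAt_const.mul (contDiffAt_sub_const_zpow _ _ hz)

theorem sum_mul_sub_pow_mul_iteratedDeriv_laurent_eq_zero {ι : Type*} (I : Finset ι) (d : 𝕜)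
    (a : ι → 𝕜) (e : ι → ℕ) (c : ℕ → 𝕜) {S : Finset ℕ} (hS : 0 ∉ S)
    (hc : ∀ k ∈ I, ∑ s ∈ S, c s * (-1) ^ s * ∏ j ∈ range s, ((e k + j : ℕ) : 𝕜) = 0)
    {lam z : 𝕜} (hz : z ≠ lam) :
    ∑ s ∈ S, c s * (z - lam) ^ s
      * iteratedDeriv s (fun w => d + ∑ k ∈ I, a k * (w - lam) ^ (-(e k : ℤ))) z = 0 := by
  calc ∑ s ∈ S, c s * (z - lam) ^ s
        * iteratedDeriv s (fun w => d + ∑ k ∈ I, a k * (w - lam) ^ (-(e k : ℤ))) z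
      = ∑ k ∈ I, a k * (z - lam) ^ (-(e k : ℤ))
          * ∑ s ∈ S, c s * (-1) ^ s * ∏ j ∈ range s, ((e k + j : ℕ) : 𝕜) := by
        simp only [mul_sum]
        rw [sum_comm]
        refine sum_congr rfl fun s hs => ?_
        rw [iteratedDeriv_const_add_sum_mul_zpow I d a _ (ne_of_mem_of_not_mem hs hS) hz, mul_sum]
        refine sum_congr rfl fun k _ => ?_
        linear_combination (c s * a k) * sub_pow_mul_iteratedDeriv_sub_const_zpow_neg (e k) s hz
    _ = 0 := sum_eq_zero fun k hk => by rw [hc k hk, mul_zero]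

end Laurent

theorem stmt_18_general {n m : ℕ}
    (A : Matrix (Fin n) (Fin n) ℂ) (lam : ℂ)
    (hA : (A - lam • 1) ^ n = 0)
    (B : Matrix (Fin m) (Fin m) ℂ)
    (Pm : Matrix (Fin n) (Fin m) ℂ)
    (S : Matrix (Fin n) (Fin n) ℂ)
    (c : ℕ → ℂ)
    (hc : ∀ k : ℕ, 1 ≤ k → k ≤ n →
      ∑ s ∈ Finset.Icc 1 (n + 1),
        c s * (-1 : ℂ) ^ s * ∏ j ∈ Finset.range s, ((k + j : ℕ) : ℂ) = 0) :
    ∀ z : ℂ, z ≠ lam → ∀ (i j : Fin m),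
      ∑ s ∈ Finset.Icc 1 (n + 1),
        c s * (z - lam) ^ s
          * iteratedDeriv s
              (fun w : ℂ =>
                ((1 : Matrix (Fin m) (Fin m) ℂ)
                  - Complex.I • (B * Pmᴴ * S⁻¹ * (A - w • 1)⁻¹ * Pm)) i j) z = 0 := by
  intro z hz i j
  have hlaurent : (fun w : ℂ =>
      ((1 : Matrix (Fin m) (Fin m) ℂ) - Complex.I • (B * Pmᴴ * S⁻¹ * (A - w • 1)⁻¹ * Pm)) i j)
      =ᶠ[𝓝 z] fun w => (1 : Matrix (Fin m) (Fin m) ℂ) i j + ∑ k ∈ range n,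
        Complex.I * (B * Pmᴴ * S⁻¹ * (A - lam • 1) ^ k * Pm : Matrix (Fin m) (Fin m) ℂ) i j
          * (w - lam) ^ (-((k + 1 : ℕ) : ℤ)) := by
    filter_upwards [isOpen_ne.mem_nhds hz] with w hw
    rw [mul_resolvent_mul_eq_neg_sum hA hw]
    simp only [Matrix.sub_apply, Matrix.smul_apply, Matrix.neg_apply, Matrix.sum_apply,
      smul_eq_mul, mul_neg, mul_sum, sub_neg_eq_add, mul_comm, mul_left_comm]
  simp_rw [hlaurent.iteratedDeriv_eq]
  refine sum_mul_sub_pow_mul_iteratedDeriv_laurent_eq_zero _ _ _ (· + 1) c (by simp)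
    (fun k hk => hc (k + 1) (by omega) (by simpa using hk)) hz

/-- Bispectrality: if the spectrum of `A` is concentrated at `λ` and the coefficients
`c_s` satisfy `Σ_{s=1}^{n+1} c_s (−1)^s k(k+1)⋯(k+s−1) = 0` for `1 ≤ k ≤ n`, then
`W(z) = I − iBΠ*S⁻¹(A−zI)⁻¹Π` satisfies `Σ_{s=1}^{n+1} c_s (z−λ)^s W^{(s)}(z) = 0`
for all `z ≠ λ`. -/
theorem stmt_18 {n m : ℕ}
    (A : Matrix (Fin n) (Fin n) ℂ) (lam : ℂ)
    (hA : (A - lam • 1) ^ n = 0)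
    (b : Fin m → ℝ) (hb : ∀ k, b k = 1 ∨ b k = -1)
    (B : Matrix (Fin m) (Fin m) ℂ)
    (hB : B = Matrix.diagonal (fun k => (b k : ℂ)))
    (Pm : Matrix (Fin n) (Fin m) ℂ)
    (S : Matrix (Fin n) (Fin n) ℂ) (hSinv : IsUnit S)
    (c : ℕ → ℂ)
    (hc0 : ∃ s ∈ Finset.Icc 1 (n + 1), c s ≠ 0)
    (hc : ∀ k : ℕ, 1 ≤ k → k ≤ n →
      ∑ s ∈ Finset.Icc 1 (n + 1),
        c s * (-1 : ℂ) ^ s * ∏ j ∈ Finset.range s, ((k + j : ℕ) : ℂ) = 0) :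
    ∀ z : ℂ, z ≠ lam → ∀ (i j : Fin m),
      ∑ s ∈ Finset.Icc 1 (n + 1),
        c s * (z - lam) ^ s
          * iteratedDeriv s
              (fun w : ℂ =>
                ((1 : Matrix (Fin m) (Fin m) ℂ)
                  - Complex.I • (B * Pmᴴ * S⁻¹ * (A - w • 1)⁻¹ * Pm)) i j) z = 0 :=
  stmt_18_general A lam hA B Pm S c hc
end
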